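/- The expected value of the Some-to-Some estimator is a lower bound on the marginal log-likelihood: E_{Φ}[(1/S)∑_{s∈Φ} E_{z ∼ q_{φ_s}}[log(p(x,z)/((1/S)∑_{k∈Φ} q_{φ_k}(z|x)))]] ≤ log p(x). -/

import Mathlib

/-!
Each subset `Φ` gives a mixture density `q_Φ = (1/S) ∑_{k ∈ Φ} q_k`, and by linearity the inner
average of the estimator is the ELBO `∫ q_Φ log (p / q_Φ)` of that single proposal. Every ELBO is
at most `log ∫ p`, by integrating `log t ≤ t - 1` at `t = p / (q_Φ ∫ p)`, and the outer average
over `Φ` preserves the bound.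
-/

open MeasureTheory Finset

theorem Real.mul_log_div_le {a b c : ℝ} (ha : 0 < a) (hb : 0 ≤ b) (hc : 0 < c) :
    b * Real.log (a / b) ≤ a / c - b + b * Real.log c := by
  rcases hb.eq_or_lt with rfl | hb
  · simpa using (div_pos ha hc).le
  have hlog : Real.log (a / b) = Real.log (a / (b * c)) + Real.log c := by
    rw [← Real.log_mul (div_pos ha (mul_pos hb hc)).ne' hc.ne']
    congr 1
    field_simp
  have hle : Real.log (a / (b * c)) ≤ a / (b * c) - 1 :=
    Real.log_le_sub_one_of_pos (div_pos ha (mul_pos hb hc))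
  calc b * Real.log (a / b) = b * Real.log (a / (b * c)) + b * Real.log c := by rw [hlog]; ring
    _ ≤ b * (a / (b * c) - 1) + b * Real.log c := by gcongr
    _ = a / c - b + b * Real.log c := by field_simp

section ELBO

variable {Z : Type*} [MeasurableSpace Z] {μ : Measure Z} {p : Z → ℝ}

theorem integral_mul_log_div_le_log_integral {q : Z → ℝ} (hp : ∀ z, 0 < p z)
    (hpInt : Integrable p μ) (hq0 : ∀ z, 0 ≤ q z) (hq1 : ∫ z, q z ∂μ = 1)
    (hInt : Integrable (fun z => q z * Real.log (p z / q z)) μ) :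
    ∫ z, q z * Real.log (p z / q z) ∂μ ≤ Real.log (∫ z, p z ∂μ) := by
  have hqInt : Integrable q μ := Integrable.of_integral_ne_zero (by simp [hq1])
  have hμ : μ ≠ 0 := by
    rintro rfl
    simp at hq1
  set I := ∫ z, p z ∂μ with hI_def
  have hI : 0 < I := by
    have hsupp : Function.support p = Set.univ :=
      Set.eq_univ_of_forall fun z => (hp z).ne'
    rw [integral_pos_iff_support_of_nonneg (fun z => (hp z).le) hpInt, hsupp]
    exact Measure.measure_univ_pos.mpr hμ
  have hdiffInt : Integrable (fun z => p z / I - q z) μ := (hpInt.div_const I).sub hqInt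
  have hlogInt : Integrable (fun z => q z * Real.log I) μ := hqInt.mul_const _
  have hBoundInt : Integrable (fun z => p z / I - q z + q z * Real.log I) μ :=
    hdiffInt.add hlogInt
  calc ∫ z, q z * Real.log (p z / q z) ∂μ
      ≤ ∫ z, (p z / I - q z + q z * Real.log I) ∂μ :=
        integral_mono hInt hBoundInt fun z => Real.mul_log_div_le (hp z) (hq0 z) hI
    _ = Real.log I := by
        rw [integral_add hdiffInt hlogInt,
          integral_sub (hpInt.div_const I) hqInt, integral_div, integral_mul_const, hq1,
          ← hI_def, div_self hI.ne']
        ring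

theorem mixture_elbo_le_log_integral {ι : Type*} {Φ : Finset ι} (hΦ : Φ.Nonempty)
    {q : ι → Z → ℝ} (hp : ∀ z, 0 < p z) (hpInt : Integrable p μ)
    (hq0 : ∀ s ∈ Φ, ∀ z, 0 ≤ q s z) (hq1 : ∀ s ∈ Φ, ∫ z, q s z ∂μ = 1)
    (hInt : ∀ s ∈ Φ, Integrable
      (fun z => q s z * Real.log (p z / ((1 / (#Φ : ℝ)) * ∑ k ∈ Φ, q k z))) μ) :
    (1 / (#Φ : ℝ)) *
        ∑ s ∈ Φ, ∫ z, q s z * Real.log (p z / ((1 / (#Φ : ℝ)) * ∑ k ∈ Φ, q k z)) ∂μ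
      ≤ Real.log (∫ z, p z ∂μ) := by
  set mix : Z → ℝ := fun z => (1 / (#Φ : ℝ)) * ∑ k ∈ Φ, q k z
  have hqInt : ∀ s ∈ Φ, Integrable (q s) μ := fun s hs =>
    Integrable.of_integral_ne_zero (by simp [hq1 s hs])
  have hmix0 : ∀ z, 0 ≤ mix z := fun z =>
    mul_nonneg (by positivity) (sum_nonneg fun k hk => hq0 k hk z)
  have hmix1 : ∫ z, mix z ∂μ = 1 := by
    rw [integral_const_mul, integral_finsetSum Φ hqInt, sum_congr rfl hq1]
    simp [hΦ.card_ne_zero]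
  have hlinear : (fun z => mix z * Real.log (p z / mix z))
      = fun z => (1 / (#Φ : ℝ)) * ∑ s ∈ Φ, q s z * Real.log (p z / mix z) := by
    funext z
    rw [← sum_mul, mul_assoc]
  have hmixInt : Integrable (fun z => mix z * Real.log (p z / mix z)) μ := by
    rw [hlinear]
    exact (integrable_finsetSum Φ hInt).const_mul _
  calc (1 / (#Φ : ℝ)) * ∑ s ∈ Φ, ∫ z, q s z * Real.log (p z / mix z) ∂μ
      = ∫ z, mix z * Real.log (p z / mix z) ∂μ := by
        rw [hlinear, integral_const_mul, integral_finsetSum Φ hInt]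
    _ ≤ Real.log (∫ z, p z ∂μ) :=
        integral_mul_log_div_le_log_integral hp hpInt hmix0 hmix1 hmixInt

end ELBO

theorem Finset.sum_one_div_card_mul_le {ι : Type*} {T : Finset ι} {x : ι → ℝ} {L : ℝ}
    (hT : T.Nonempty) (h : ∀ t ∈ T, x t ≤ L) : ∑ t ∈ T, 1 / (#T : ℝ) * x t ≤ L := by
  rw [← mul_sum, one_div, inv_mul_eq_div, ← expect_eq_sum_div_card]
  exact expect_le hT h

theorem s2s_expectation_le_log_marginal_general
    {Z : Type*} [MeasurableSpace Z] (μ : Measure Z)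
    (A S : ℕ) (hS : 1 ≤ S) (hSA : S ≤ A)
    (p : Z → ℝ) (hp : ∀ z, 0 < p z) (hpInt : Integrable p μ)
    (q : Fin A → Z → ℝ)
    (hq0 : ∀ a z, 0 < q a z) (hq1 : ∀ a, ∫ z, q a z ∂μ = 1)
    (hIntS : ∀ Φ ∈ Finset.powersetCard S (Finset.univ : Finset (Fin A)), ∀ s,
      Integrable
        (fun z => q s z * Real.log (p z / ((1 / (S : ℝ)) * ∑ k ∈ Φ, q k z))) μ) :
    ∑ Φ ∈ Finset.powersetCard S (Finset.univ : Finset (Fin A)),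
        (1 / (A.choose S : ℝ)) * ((1 / (S : ℝ)) *
          ∑ s ∈ Φ, ∫ z, q s z * Real.log (p z / ((1 / (S : ℝ)) * ∑ k ∈ Φ, q k z)) ∂μ)
      ≤ Real.log (∫ z, p z ∂μ) := by
  have hsubsets : (powersetCard S (univ : Finset (Fin A))).Nonempty :=
    powersetCard_nonempty.mpr (by simpa using hSA)
  have hbound : ∀ Φ ∈ powersetCard S (univ : Finset (Fin A)),
      (1 / (S : ℝ)) *
          ∑ s ∈ Φ, ∫ z, q s z * Real.log (p z / ((1 / (S : ℝ)) * ∑ k ∈ Φ, q k z)) ∂μ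
        ≤ Real.log (∫ z, p z ∂μ) := by
    intro Φ hΦ
    have hcard : #Φ = S := mem_powersetCard_univ.mp hΦ
    have hne : Φ.Nonempty := card_pos.mp (by omega)
    have := mixture_elbo_le_log_integral hne hp hpInt (fun s _ z => (hq0 s z).le) (fun s _ => hq1 s)
      (by simpa only [hcard] using fun s _ => hIntS Φ hΦ s)
    rwa [hcard] at this
  have := sum_one_div_card_mul_le hsubsets hbound
  rwa [card_powersetCard, card_univ, Fintype.card_fin] at this

/-- The expected value of the Some-to-Some estimator is a lower bound on the
marginal log-likelihood. -/
theorem s2s_expectation_le_log_marginal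
    {Z : Type*} [MeasurableSpace Z] (μ : Measure Z) [SigmaFinite μ]
    (A S : ℕ) (hS : 1 ≤ S) (hSA : S ≤ A)
    (p : Z → ℝ) (hp : ∀ z, 0 < p z) (hpInt : Integrable p μ)
    (q : Fin A → Z → ℝ)
    (hq0 : ∀ a z, 0 < q a z) (hq1 : ∀ a, ∫ z, q a z ∂μ = 1)
    (hIntA : ∀ a, Integrable
      (fun z => q a z * Real.log (p z / ((1 / (A : ℝ)) * ∑ a', q a' z))) μ)
    (hIntS : ∀ Φ ∈ Finset.powersetCard S (Finset.univ : Finset (Fin A)), ∀ s,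
      Integrable
        (fun z => q s z * Real.log (p z / ((1 / (S : ℝ)) * ∑ k ∈ Φ, q k z))) μ) :
    ∑ Φ ∈ Finset.powersetCard S (Finset.univ : Finset (Fin A)),
        (1 / (A.choose S : ℝ)) * ((1 / (S : ℝ)) *
          ∑ s ∈ Φ, ∫ z, q s z * Real.log (p z / ((1 / (S : ℝ)) * ∑ k ∈ Φ, q k z)) ∂μ)
      ≤ Real.log (∫ z, p z ∂μ) :=
  s2s_expectation_le_log_marginal_general μ A S hS hSA p hp hpInt q hq0 hq1 hIntS
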